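/- Control of the ρ-moment by the p-moment: for f ≥ 0 on 𝔹² with mass M and p-moment I = ∫ p f dV, one has ∫ ρ f dV ≤ 2M · arcsinh(√(I/(2M))), where ρ(x) is the hyperbolic distance to the origin and p = 2 sinh²(ρ/2). -/
import Mathlib


open MeasureTheory

/-- The hyperbolic volume measure on the Poincaré disk, viewed as a measure on ℝ²
supported on the unit ball, with density (2/(1-|x|²))² w.r.t. Lebesgue measure. -/
noncomputable def hypVol : Measure (EuclideanSpace ℝ (Fin 2)) :=
  (volume.restrict (Metric.ball (0 : EuclideanSpace ℝ (Fin 2)) 1)).withDensity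
    (fun x => ENNReal.ofReal ((2 / (1 - ‖x‖ ^ 2)) ^ 2))

/-- Hyperbolic distance from x to the origin. -/
noncomputable def hypRho (x : EuclideanSpace ℝ (Fin 2)) : ℝ :=
  Real.log ((1 + ‖x‖) / (1 - ‖x‖))

/-- The exponential weight p = 2 sinh²(ρ/2). -/
noncomputable def hypP (x : EuclideanSpace ℝ (Fin 2)) : ℝ :=
  2 * (Real.sinh (hypRho x / 2)) ^ 2

/-- Tangent-line inequality for the convex function cosh at a point `R ≥ 0`. -/
lemma cosh_tangent_line (R r : ℝ) (hR : 0 ≤ R) :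
    Real.cosh R + Real.sinh R * (r - R) ≤ Real.cosh r := by
  have key : Real.cosh r = Real.cosh R * Real.cosh (r - R) + Real.sinh R * Real.sinh (r - R) := by
    rw [← Real.cosh_add]; ring_nf
  have h1 := Real.one_le_cosh (r - R)
  have h2 := Real.add_one_le_exp (r - R)
  have h3 := Real.sinh_add_cosh (r - R)
  have h4 : Real.sinh R ≤ Real.cosh R := by
    nlinarith [Real.cosh_sub_sinh R, Real.exp_pos (-R)]
  have h5 : 0 ≤ Real.sinh R := Real.sinh_nonneg_iff.mpr hR
  nlinarith

/-- `p = cosh ρ - 1`. -/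
lemma hypP_eq (x : EuclideanSpace ℝ (Fin 2)) : hypP x = Real.cosh (hypRho x) - 1 := by
  have : Real.cosh (hypRho x) = Real.cosh (2 * (hypRho x / 2)) := by ring_nf
  rw [hypP, this, Real.cosh_two_mul, Real.cosh_sq]
  ring

theorem stmt_19 (f : EuclideanSpace ℝ (Fin 2) → ℝ) (M I : ℝ) (hM : 0 < M)
    (hf0 : ∀ x, 0 ≤ f x) (hf_int : Integrable f hypVol)
    (hfM : ∫ x, f x ∂hypVol = M)
    (hpf_int : Integrable (fun x => hypP x * f x) hypVol)
    (hI : ∫ x, hypP x * f x ∂hypVol = I)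
    (hrhof_int : Integrable (fun x => hypRho x * f x) hypVol) :
    ∫ x, hypRho x * f x ∂hypVol ≤ 2 * M * Real.arsinh (Real.sqrt (I / (2 * M))) := by
  have hpf0 : ∀ x, 0 ≤ hypP x * f x := fun x =>
    mul_nonneg (by rw [hypP]; positivity) (hf0 x)
  have hI0 : 0 ≤ I := hI ▸ integral_nonneg hpf0
  rcases eq_or_lt_of_le hI0 with hIz | hIpos
  · -- case I = 0
    have hz : (fun x => hypP x * f x) =ᵐ[hypVol] 0 :=
      (integral_eq_zero_iff_of_nonneg hpf0 hpf_int).mp (hI.trans hIz.symm)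
    have hz' : (fun x => hypRho x * f x) =ᵐ[hypVol] 0 := by
      filter_upwards [hz] with x hx
      rcases mul_eq_zero.mp hx with h | h
      · have := hypP_eq x
        have hs : Real.sinh (hypRho x / 2) = 0 := by
          rw [hypP] at h; nlinarith [sq_nonneg (Real.sinh (hypRho x / 2))]
        have : hypRho x = 0 := by
          have := Real.sinh_eq_zero.mp hs; linarith
        simp [this]
      · simp [h]
    rw [integral_congr_ae hz']
    simp only [Pi.zero_apply, integral_zero]
    rw [← hIz]
    simp [Real.arsinh_zero]
  · -- case I > 0
    set s := Real.sqrt (I / (2 * M)) with hs_def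
    have hspos : 0 < s := Real.sqrt_pos.mpr (by positivity)
    have hs2 : s ^ 2 = I / (2 * M) := Real.sq_sqrt (by positivity)
    set R := 2 * Real.arsinh s with hR_def
    have hRpos : 0 < R := by
      have := Real.arsinh_pos_iff.mpr hspos; linarith
    have hcoshR : Real.cosh R = 1 + I / M := by
      rw [hR_def, Real.cosh_two_mul, Real.cosh_sq, Real.sinh_arsinh, hs2]
      field_simp
      ring
    have hsinhR : 0 < Real.sinh R := Real.sinh_pos_iff.mpr hRpos
    set b := (Real.sinh R)⁻¹ with hb_def
    have hb : 0 < b := inv_pos.mpr hsinhR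
    set a := R - b * (I / M) with ha_def
    have hne : Real.sinh R ≠ 0 := ne_of_gt hsinhR
    have hbm : b * Real.sinh R = 1 := inv_mul_cancel₀ hne
    have hpt : ∀ x, hypRho x * f x ≤ a * f x + b * (hypP x * f x) := by
      intro x
      have h1 := cosh_tangent_line R (hypRho x) hRpos.le
      rw [hcoshR] at h1
      have key : Real.sinh R * (hypRho x - R) ≤ Real.cosh (hypRho x) - 1 - I / M := by
        linarith
      have hmul := mul_le_mul_of_nonneg_left key hb.le
      have hrw : hypRho x - R = b * (Real.sinh R * (hypRho x - R)) := by
        rw [← mul_assoc, hbm, one_mul]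
      have h2 : hypRho x ≤ a + b * hypP x := by
        rw [hypP_eq x]
        show hypRho x ≤ R - b * (I / M) + b * (Real.cosh (hypRho x) - 1)
        nlinarith [hmul, hrw]
      nlinarith [mul_le_mul_of_nonneg_right h2 (hf0 x)]
    have hint2 : Integrable (fun x => a * f x + b * (hypP x * f x)) hypVol :=
      (hf_int.const_mul a).add (hpf_int.const_mul b)
    have hstep := integral_mono hrhof_int hint2 hpt
    have heq : ∫ x, (a * f x + b * (hypP x * f x)) ∂hypVol = a * M + b * I := by
      rw [integral_add (hf_int.const_mul a) (hpf_int.const_mul b),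
        integral_const_mul, integral_const_mul, hfM, hI]
    rw [heq] at hstep
    have hfinal : a * M + b * I = 2 * M * Real.arsinh s := by
      rw [ha_def, hR_def]
      field_simp
      ring
    linarith [hstep, hfinal.le]
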